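/- arXiv:2510.13503 — 2 statements merged into one kernel-verified Lean document; each statement's English description precedes it below -/
import Mathlib

section
/- For a regular cardinal κ, κ-small limits commute with κ-filtered colimits in the category of sets: for a κ-small category J and a κ-filtered category P, the canonical map colim_{p∈P} lim_{j∈J} F(j,p) → lim_{j∈J} colim_{p∈P} F(j,p) is a bijection for any functor F : J × P → Set. -/
open CategoryTheory CategoryTheory.Limits Cardinal

universe v

/-- A category is `κ`-small if its sets of objects and morphisms have cardinality `< κ`. -/
def IsKappaSmall (κ : Cardinal.{v}) (J : Type v) [SmallCategory J] : Prop :=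
  #J < κ ∧ #(Arrow J) < κ

/-- A category `P` is `κ`-filtered if every `κ`-small diagram in `P` admits a cocone. -/
def IsKappaFiltered (κ : Cardinal.{v}) (P : Type v) [SmallCategory P] : Prop :=
  ∀ (A : Type v) (_ : SmallCategory A), IsKappaSmall κ A → ∀ G : A ⥤ P, Nonempty (Cocone G)

/-!
Regard `F` as a diagram `X : P ⥤ (J ⥤ Type v)`. The comparison map is the canonical map
`colim_p lim X(p) → lim (colim_p X(p))`, followed by the identification of the colimit in the
functor category with the pointwise colimit. So it suffices that `lim : (J ⥤ Type v) ⥤ Type v`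
preserves `κ`-filtered colimits when `J` has fewer than `κ` arrows. For this, an element of
`lim_j colim_p` has a representative for each `j`; fewer than `κ` stages have a common upper
bound, and the compatibility along each of the fewer than `κ` arrows of `J` holds after a
further step, which again can be taken uniformly. Injectivity is the same argument, one step
per object of `J`.
-/

lemma IsKappaSmall.hasCardinalLT_arrow {κ : Cardinal.{v}} {J : Type v} [SmallCategory J]
    (hJ : IsKappaSmall κ J) : HasCardinalLT (Arrow J) κ :=
  (hasCardinalLT_iff_cardinal_mk_lt _ _).2 hJ.2

lemma IsKappaFiltered.isCardinalFiltered {κ : Cardinal.{v}} [Fact κ.IsRegular]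
    {P : Type v} [SmallCategory P] (hP : IsKappaFiltered κ P) : IsCardinalFiltered P κ where
  nonempty_cocone {A _} G hA := hP A _
    ⟨(hasCardinalLT_iff_cardinal_mk_lt _ _).1 (hasCardinalLT_of_hasCardinalLT_arrow hA),
      (hasCardinalLT_iff_cardinal_mk_lt _ _).1 hA⟩ G

namespace CategoryTheory.Limits

universe w u u₁ u₂ v₁ v₂

section

variable (J : Type u₁) [Category.{v₁} J] (C : Type u) [Category.{w} C] [HasLimitsOfShape J C]

noncomputable def limConeEvaluation : Cone (evaluation J C) where
  pt := lim
  π := { app j := { app D := limit.π D j } }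

noncomputable def isLimitMapConeLimConeEvaluation (D : J ⥤ C) :
    IsLimit (((evaluation (J ⥤ C) C).obj D).mapCone (limConeEvaluation J C)) :=
  limit.isLimit D

end

lemma colimitLimitToLimitColimit_eq_desc_comp_limMap {J : Type u₁} {K : Type u₂}
    [Category.{v₁} J] [Category.{v₂} K] {C : Type u} [Category.{w} C]
    [HasLimitsOfShape J C] [HasColimitsOfShape K C] (F : J × K ⥤ C) :
    colimitLimitToLimitColimit F =
      colimit.desc _ (lim.mapCocone (colimit.cocone (Functor.curry.obj (Prod.swap K J ⋙ F)))) ≫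
        lim.map (colimitIsoFlipCompColim _).hom := by
  refine colimit.hom_ext fun k => limit.hom_ext fun j => ?_
  simp only [ι_colimitLimitToLimitColimit_π, colimit.ι_desc_assoc, Functor.mapCocone_ι_app,
    colimit.cocone_ι, lim_map, Category.assoc]
  -- `(curry.obj (swap ⋙ F)).flip` and `curry.obj F` agree only up to unfolding
  erw [limMap_π, limMap_π_assoc]
  simp only [colimitIsoFlipCompColim_hom_app, colimitObjIsoColimitCompEvaluation_ι_app_hom]
  rfl

theorem isIso_colimitLimitToLimitColimit_of_isCardinalFiltered {J P : Type v} [SmallCategory J]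
    [SmallCategory P] (κ : Cardinal.{v}) [Fact κ.IsRegular] (hJ : HasCardinalLT (Arrow J) κ)
    [IsCardinalFiltered P κ] (F : J × P ⥤ Type v) :
    IsIso (colimitLimitToLimitColimit F) := by
  let X := Functor.curry.obj (Prod.swap P J ⋙ F)
  have hlim : IsColimit (lim.mapCocone (colimit.cocone X)) :=
    Functor.Accessible.Limits.isColimitMapCocone (limConeEvaluation J (Type v))
      (isLimitMapConeLimConeEvaluation J (Type v)) κ hJ (colimit.cocone X)
      fun j => isColimitOfPreserves ((evaluation J _).obj j) (colimit.isColimit X)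
  have : IsIso (colimit.desc _ (lim.mapCocone (colimit.cocone X))) :=
    (colimit.isColimit _).nonempty_isColimit_iff_isIso_desc.1 ⟨hlim⟩
  rw [colimitLimitToLimitColimit_eq_desc_comp_limMap]
  infer_instance

end CategoryTheory.Limits

/-- For a regular cardinal `κ`, `κ`-small limits commute with `κ`-filtered colimits in the
category of sets: for a `κ`-small category `J`, a `κ`-filtered category `P`, and any functor
`F : J × P ⥤ Type`, the canonical map
`colim_{p∈P} lim_{j∈J} F(j,p) → lim_{j∈J} colim_{p∈P} F(j,p)` is a bijection. -/
theorem stmt6 (κ : Cardinal.{v}) (hκ : κ.IsRegular)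
    (J : Type v) [SmallCategory J] (hJ : IsKappaSmall κ J)
    (P : Type v) [SmallCategory P] (hP : IsKappaFiltered κ P)
    (F : J × P ⥤ Type v) :
    Function.Bijective (colimitLimitToLimitColimit F) := by
  have : Fact κ.IsRegular := ⟨hκ⟩
  have := hP.isCardinalFiltered
  exact (isIso_iff_bijective _).1
    (isIso_colimitLimitToLimitColimit_of_isCardinalFiltered κ hJ.hasCardinalLT_arrow F)
end

section
/- Let κ ≤ λ be regular cardinals and A a small category with κ-small colimits. Then every λ-presentable (λ-compact) object of Ind_κ(A) is a retract of an object that is the colimit of a λ-small diagram with values in (the image of) A. -/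
open CategoryTheory CategoryTheory.Limits Cardinal Opposite

universe v u

/-- A preorder is `κ`-directed if every subset of cardinality `< κ` has an upper bound. -/
def KDirected (κ : Cardinal.{v}) (P : Type v) [Preorder P] : Prop :=
  ∀ s : Set P, #s < κ → ∃ x : P, ∀ y ∈ s, y ≤ x

/-- An object `X` is `κ`-compact if `Hom(X, −)` preserves colimits of `κ`-directed posets. -/
def IsKappaCompact (κ : Cardinal.{v}) {C : Type u} [Category.{v} C] (X : C) : Prop :=
  ∀ (P : Type v) (_ : PartialOrder P), KDirected κ P →
    Nonempty (PreservesColimitsOfShape P (coyoneda.obj (op X)))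

/-- A presentation of an object `Y` of `C` as a `κ`-directed colimit of objects of `A`
(along `ι : A ⥤ C`). -/
structure IndPresentation (κ : Cardinal.{v}) {A : Type v} [SmallCategory A]
    {C : Type u} [Category.{v} C] (ι : A ⥤ C) (Y : C) where
  P : Type v
  [po : PartialOrder P]
  directed : KDirected κ P
  diag : P ⥤ A
  cocone : Cocone (diag ⋙ ι)
  isColimit : IsColimit cocone
  iso : cocone.pt ≅ Y

attribute [instance] IndPresentation.po

/-- An exhibition of `X` as a retract of the colimit of a `λ`-small diagram in `A`. -/
structure SmallRetractPresentation (lam : Cardinal.{v}) {A : Type v} [SmallCategory A]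
    {C : Type u} [Category.{v} C] (ι : A ⥤ C) (X : C) where
  J : Type v
  [cat : SmallCategory J]
  small_obj : #J < lam
  small_hom : #(Arrow J) < lam
  diag : J ⥤ A
  cocone : Cocone (diag ⋙ ι)
  isColimit : IsColimit cocone
  s : X ⟶ cocone.pt
  r : cocone.pt ⟶ X
  retract : s ≫ r = 𝟙 X

attribute [instance] SmallRetractPresentation.cat

/-!
Fix a presentation `X ≅ colim_{p ∈ P} ι (d p)` over a `κ`-directed poset `P`. For every subset
`S ⊆ P` the diagram `ι ∘ d|_S` has a colimit in `C`: it is the `κ`-directed colimit, over the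
`κ`-small `T ⊆ S`, of `ι (colim d|_T)`, because `ι` preserves `κ`-small colimits (the `ι a` are
`κ`-compact and every object is a `κ`-directed colimit of them). Running the same argument over
the `λ`-small `S ⊆ P` exhibits `X` as a `λ`-directed colimit of the `colim (ι ∘ d|_S)`, so by
`λ`-compactness the identity of `X` factors through one of them.
-/

namespace Cardinal

lemma mk_le_mk_arrow (K : Type v) [Category.{v} K] : #K ≤ #(Arrow K) :=
  mk_le_of_injective (f := fun k : K => Arrow.mk (𝟙 k)) fun _ _ h => congrArg Comma.left h

lemma mk_arrow_le_mul_self (P : Type v) [Preorder P] : #(Arrow P) ≤ #P * #P := by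
  rw [mul_def]
  refine mk_le_of_injective (f := fun a : Arrow P => (a.left, a.right)) ?_
  rintro ⟨l, r, f⟩ ⟨l', r', f'⟩ h
  obtain ⟨rfl, rfl⟩ := Prod.mk.inj h
  rw [Subsingleton.elim f f']

lemma mk_arrow_lt {κ : Cardinal.{v}} (hκ : ℵ₀ ≤ κ) {P : Type v} [Preorder P] (hP : #P < κ) :
    #(Arrow P) < κ :=
  (mk_arrow_le_mul_self P).trans_lt (mul_lt_of_lt hκ hP hP)

end Cardinal

namespace KDirected

variable {κ : Cardinal.{v}} {P : Type v} [Preorder P]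

lemma exists_forall_ge (hP : KDirected κ P) {K : Type v} (hK : #K < κ) (q : K → P) :
    ∃ r, ∀ k, q k ≤ r := by
  obtain ⟨r, hr⟩ := hP (Set.range q) (mk_range_le.trans_lt hK)
  exact ⟨r, fun k => hr _ ⟨k, rfl⟩⟩

lemma exists_ge_forall_ge (hP : KDirected κ P) (hκ : ℵ₀ ≤ κ) {K : Type v} (hK : #K < κ)
    (p : P) (q : K → P) : ∃ r, p ≤ r ∧ ∀ k, q k ≤ r := by
  have hsmall : #(insert p (Set.range q) : Set P) < κ :=
    mk_insert_le.trans_lt (add_lt_of_lt hκ (mk_range_le.trans_lt hK) (one_lt_aleph0.trans_le hκ))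
  obtain ⟨r, hr⟩ := hP _ hsmall
  exact ⟨r, hr p (Set.mem_insert p _), fun k => hr _ (Set.mem_insert_of_mem p ⟨k, rfl⟩)⟩

lemma isDirected (hP : KDirected κ P) (hκ : ℵ₀ ≤ κ) : IsDirected P (· ≤ ·) :=
  ⟨fun a b => by
    obtain ⟨r, hr⟩ := hP {a, b} ((Set.toFinite _).lt_aleph0.trans_le hκ)
    exact ⟨r, hr a (by simp), hr b (by simp)⟩⟩

lemma isFiltered (hP : KDirected κ P) (hκ : ℵ₀ ≤ κ) : IsFiltered P := by
  have : Nonempty P := by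
    obtain ⟨r, -⟩ := hP ∅ (by simpa using aleph0_pos.trans_le hκ)
    exact ⟨r⟩
  have := hP.isDirected hκ
  infer_instance

end KDirected

abbrev SmallSubsets (κ : Cardinal.{v}) (α : Type v) : Set (Set α) := {T | #T < κ}

lemma kDirected_smallSubsets {κ : Cardinal.{v}} (hκ : κ.IsRegular) (α : Type v) :
    KDirected κ (SmallSubsets κ α) := by
  intro s hs
  refine ⟨⟨⋃ T : s, T.1.1, ?_⟩, fun T hT => Set.subset_iUnion (fun T : s => T.1.1) ⟨T, hT⟩⟩
  exact (card_iUnion_lt_iff_forall_of_isRegular hκ hs).2 fun T => T.1.2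

lemma exists_mem_smallSubsets {κ : Cardinal.{v}} (hκ : ℵ₀ ≤ κ) {α : Type v} (a : α) :
    ∃ U : SmallSubsets κ α, a ∈ U.1 :=
  ⟨⟨{a}, by simpa using one_lt_aleph0.trans_le hκ⟩, rfl⟩

namespace IsKappaCompact

variable {κ : Cardinal.{v}} {C : Type u} [Category.{v} C] {P : Type v} [PartialOrder P]
  {D : P ⥤ C} {c : Cocone D}

lemma exists_factor (hc : IsColimit c) (hP : KDirected κ P) {W : C} (hW : IsKappaCompact κ W)
    (f : W ⟶ c.pt) : ∃ p, ∃ g : W ⟶ D.obj p, g ≫ c.ι.app p = f := by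
  have := (hW P inferInstance hP).some
  exact Types.jointly_surjective _ (isColimitOfPreserves (coyoneda.obj (op W)) hc) f

lemma exists_comp_map_eq (hc : IsColimit c) (hP : KDirected κ P) (hκ : ℵ₀ ≤ κ) {W : C}
    (hW : IsKappaCompact κ W) {p : P} {g g' : W ⟶ D.obj p}
    (h : g ≫ c.ι.app p = g' ≫ c.ι.app p) :
    ∃ q, ∃ hpq : p ≤ q, g ≫ D.map (homOfLE hpq) = g' ≫ D.map (homOfLE hpq) := by
  have := (hW P inferInstance hP).some
  have := hP.isFiltered hκ
  obtain ⟨q, f, f', hq⟩ := (Types.FilteredColimit.isColimit_eq_iff _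
    (isColimitOfPreserves (coyoneda.obj (op W)) hc)).1 h
  rw [Subsingleton.elim f' f] at hq
  exact ⟨q, leOfHom f, hq⟩

lemma exists_factor_pair (hc : IsColimit c) (hP : KDirected κ P) (hκ : ℵ₀ ≤ κ) {W : C}
    (hW : IsKappaCompact κ W) (f f' : W ⟶ c.pt) :
    ∃ p, ∃ g g' : W ⟶ D.obj p, g ≫ c.ι.app p = f ∧ g' ≫ c.ι.app p = f' := by
  obtain ⟨p, g, rfl⟩ := hW.exists_factor hc hP f
  obtain ⟨p', g', rfl⟩ := hW.exists_factor hc hP f'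
  have := hP.isDirected hκ
  obtain ⟨r, hpr, hp'r⟩ := exists_ge_ge p p'
  exact ⟨r, g ≫ D.map (homOfLE hpr), g' ≫ D.map (homOfLE hp'r), by simp, by simp⟩

lemma exists_factor_family (hc : IsColimit c) (hP : KDirected κ P) {K : Type v} (hK : #K < κ)
    {W : K → C} (hW : ∀ k, IsKappaCompact κ (W k)) (f : ∀ k, W k ⟶ c.pt) :
    ∃ p, ∃ g : ∀ k, W k ⟶ D.obj p, ∀ k, g k ≫ c.ι.app p = f k := by
  choose p g hg using fun k => (hW k).exists_factor hc hP (f k)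
  obtain ⟨r, hr⟩ := hP.exists_forall_ge hK p
  exact ⟨r, fun k => g k ≫ D.map (homOfLE (hr k)), fun k => by rw [Category.assoc, c.w, hg]⟩

lemma exists_comp_map_eq_family (hc : IsColimit c) (hP : KDirected κ P) (hκ : ℵ₀ ≤ κ)
    {K : Type v} (hK : #K < κ) {W : K → C} (hW : ∀ k, IsKappaCompact κ (W k)) {p : P}
    (g g' : ∀ k, W k ⟶ D.obj p) (h : ∀ k, g k ≫ c.ι.app p = g' k ≫ c.ι.app p) :
    ∃ q, ∃ hpq : p ≤ q, ∀ k, g k ≫ D.map (homOfLE hpq) = g' k ≫ D.map (homOfLE hpq) := by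
  choose q hpq hq using fun k => (hW k).exists_comp_map_eq hc hP hκ (h k)
  obtain ⟨r, hpr, hqr⟩ := hP.exists_ge_forall_ge hκ hK p q
  refine ⟨r, hpr, fun k => ?_⟩
  rw [show homOfLE hpr = homOfLE (hpq k) ≫ homOfLE (hqr k) from rfl, D.map_comp,
    reassoc_of% (hq k)]

end IsKappaCompact

section DirectedCover

variable {C : Type u} [Category.{v} C] {P : Type v} [Preorder P]

/- Written out rather than as a composite with the inclusion, so that `(F.restrictSubset S).obj x`
is reducibly `F.obj x`. -/
abbrev CategoryTheory.Functor.restrictSubset (F : P ⥤ C) (S : Set P) : S ⥤ C where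
  obj x := F.obj x
  map f := F.map (homOfLE (leOfHom f))
  map_comp f g := by rw [← F.map_comp]; rfl

abbrev CategoryTheory.Limits.Cocone.restrictSubset {F : P ⥤ C} (c : Cocone F) (S : Set P) :
    Cocone (F.restrictSubset S) where
  pt := c.pt
  ι := { app := fun x => c.ι.app x }

variable (F : P ⥤ C) (𝒰 : Set (Set P)) [∀ U : 𝒰, HasColimit (F.restrictSubset U)]

noncomputable abbrev restrictionColimits : 𝒰 ⥤ C where
  obj U := colimit (F.restrictSubset U)
  map {U U'} h := colimit.desc (F.restrictSubset U)
    { pt := colimit (F.restrictSubset U')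
      ι :=
        { app := fun x => colimit.ι (F.restrictSubset U') (Set.inclusion (leOfHom h) x)
          naturality := fun x y f => (colimit.w (F.restrictSubset U')
            (homOfLE (leOfHom f) : Set.inclusion (leOfHom h) x ⟶ Set.inclusion (leOfHom h) y)).trans
              (Category.comp_id _).symm } }
  map_id U := colimit.hom_ext fun x => by rw [colimit.ι_desc, Category.comp_id]
  map_comp f g := colimit.hom_ext fun x => by
    rw [colimit.ι_desc, colimit.ι_desc_assoc, colimit.ι_desc]

lemma ι_restrictionColimits_map {U U' : 𝒰} (h : U ⟶ U') (x : U.1) :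
    colimit.ι (F.restrictSubset U) x ≫ (restrictionColimits F 𝒰).map h =
      colimit.ι (F.restrictSubset U') (Set.inclusion (leOfHom h) x) :=
  colimit.ι_desc _ x

variable {F 𝒰}

noncomputable abbrev CategoryTheory.Limits.Cocone.toRestrictionColimits (c : Cocone F) :
    Cocone (restrictionColimits F 𝒰) where
  pt := c.pt
  ι :=
    { app := fun U => colimit.desc (F.restrictSubset U) (c.restrictSubset U)
      naturality := fun U U' h => colimit.hom_ext fun x => by
        rw [reassoc_of% (ι_restrictionColimits_map F 𝒰 h), colimit.ι_desc, colimit.ι_desc_assoc,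
          Functor.const_obj_map, Category.comp_id] }

lemma ι_toRestrictionColimits_app (c : Cocone F) (U : 𝒰) (x : U.1) :
    colimit.ι (F.restrictSubset U) x ≫ (c.toRestrictionColimits (𝒰 := 𝒰)).ι.app U = c.ι.app x :=
  colimit.ι_desc _ x

lemma ι_comp_app_eq_of_le (t : Cocone (restrictionColimits F 𝒰)) {p : P} {U W : 𝒰}
    (hUW : U.1 ⊆ W.1) (hU : p ∈ U.1) :
    colimit.ι (F.restrictSubset U) ⟨p, hU⟩ ≫ t.ι.app U =
      colimit.ι (F.restrictSubset W) ⟨p, hUW hU⟩ ≫ t.ι.app W := by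
  rw [← t.w (homOfLE hUW : U ⟶ W), reassoc_of% (ι_restrictionColimits_map F 𝒰 (homOfLE hUW))]

lemma ι_comp_app_eq_of_mem (h𝒰 : IsDirected 𝒰 (· ≤ ·)) (t : Cocone (restrictionColimits F 𝒰))
    {p : P} {U V : 𝒰} (hU : p ∈ U.1) (hV : p ∈ V.1) :
    colimit.ι (F.restrictSubset U) ⟨p, hU⟩ ≫ t.ι.app U =
      colimit.ι (F.restrictSubset V) ⟨p, hV⟩ ≫ t.ι.app V := by
  obtain ⟨W, hUW, hVW⟩ := exists_ge_ge U V
  rw [ι_comp_app_eq_of_le t hUW, ι_comp_app_eq_of_le t hVW]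

variable (h𝒰 : IsDirected 𝒰 (· ≤ ·)) (hcov : ∀ p, ∃ U : 𝒰, p ∈ U.1)

/- The leg at `p` goes through a chosen member of the cover containing `p`; by directedness the
choice does not matter (`ofRestrictionColimits_ι_app`). -/
noncomputable abbrev CategoryTheory.Limits.Cocone.ofRestrictionColimits
    (t : Cocone (restrictionColimits F 𝒰)) : Cocone F where
  pt := t.pt
  ι :=
    { app := fun p => colimit.ι (F.restrictSubset (hcov p).choose) ⟨p, (hcov p).choose_spec⟩ ≫
        t.ι.app (hcov p).choose
      naturality := fun p q f => by
        obtain ⟨W, hpW, hqW⟩ : ∃ W : 𝒰, (hcov p).choose.1 ⊆ W ∧ (hcov q).choose.1 ⊆ W :=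
          exists_ge_ge (hcov p).choose (hcov q).choose
        rw [ι_comp_app_eq_of_le t hpW, ι_comp_app_eq_of_le t hqW, Functor.const_obj_map]
        exact (colimit.w_assoc (F.restrictSubset W) (homOfLE (leOfHom f) :
          (⟨p, hpW (hcov p).choose_spec⟩ : W.1) ⟶ ⟨q, hqW (hcov q).choose_spec⟩) _).trans
            (Category.comp_id _).symm }

lemma ofRestrictionColimits_ι_app (t : Cocone (restrictionColimits F 𝒰)) {p : P} (U : 𝒰)
    (hp : p ∈ U.1) :
    (Cocone.ofRestrictionColimits h𝒰 hcov t).ι.app p =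
      colimit.ι (F.restrictSubset U) ⟨p, hp⟩ ≫ t.ι.app U :=
  ι_comp_app_eq_of_mem h𝒰 t _ hp

noncomputable def isColimitOfRestrictionColimits {t : Cocone (restrictionColimits F 𝒰)}
    (ht : IsColimit t) : IsColimit (Cocone.ofRestrictionColimits h𝒰 hcov t) where
  desc s := ht.desc s.toRestrictionColimits
  fac s p := by
    rw [ofRestrictionColimits_ι_app h𝒰 hcov t _ (hcov p).choose_spec, Category.assoc, ht.fac,
      ι_toRestrictionColimits_app]
  uniq s m hm := ht.hom_ext fun U => colimit.hom_ext fun ⟨x, hx⟩ => by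
    rw [ht.fac, ι_toRestrictionColimits_app, ← hm x, ofRestrictionColimits_ι_app h𝒰 hcov t U hx,
      Category.assoc]

noncomputable def isColimitToRestrictionColimits {c : Cocone F} (hc : IsColimit c) :
    IsColimit (c.toRestrictionColimits (𝒰 := 𝒰)) where
  desc t := hc.desc (Cocone.ofRestrictionColimits h𝒰 hcov t)
  fac t U := colimit.hom_ext fun ⟨x, hx⟩ => by
    rw [reassoc_of% ι_toRestrictionColimits_app, hc.fac, ofRestrictionColimits_ι_app h𝒰 hcov t U hx]
  uniq t m hm := hc.hom_ext fun p => by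
    rw [hc.fac, ofRestrictionColimits_ι_app h𝒰 hcov t _ (hcov p).choose_spec, ← hm,
      reassoc_of% ι_toRestrictionColimits_app]

end DirectedCover

section IndCategory

variable {κ : Cardinal.{v}} {A : Type v} [SmallCategory A] {C : Type u} [Category.{v} C]
  {ι : A ⥤ C} [ι.Full] [ι.Faithful]

lemma hom_ext_of_isColimit_of_fullyFaithful {K : Type v} [SmallCategory K] {b : K ⥤ A}
    {c : Cocone b} (hc : IsColimit c) {a : A} {f f' : ι.obj c.pt ⟶ ι.obj a}
    (h : ∀ k, ι.map (c.ι.app k) ≫ f = ι.map (c.ι.app k) ≫ f') : f = f' := by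
  rw [← ι.map_preimage f, ← ι.map_preimage f']
  congr 1
  exact hc.hom_ext fun k => ι.map_injective (by simpa using h k)

lemma hom_ext_of_ind (hκ : ℵ₀ ≤ κ) (hcpt : ∀ a, IsKappaCompact κ (ι.obj a))
    (hgen : ∀ Y : C, Nonempty (IndPresentation κ ι Y)) {K : Type v} [SmallCategory K]
    (hK : #K < κ) {b : K ⥤ A} {c : Cocone b} (hc : IsColimit c) {Y : C}
    {m m' : ι.obj c.pt ⟶ Y} (h : ∀ k, ι.map (c.ι.app k) ≫ m = ι.map (c.ι.app k) ≫ m') :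
    m = m' := by
  obtain ⟨pr⟩ := hgen Y
  obtain ⟨p, u, u', hu, hu'⟩ := (hcpt c.pt).exists_factor_pair pr.isColimit pr.directed
    hκ (m ≫ pr.iso.inv) (m' ≫ pr.iso.inv)
  obtain ⟨q, hpq, hq⟩ := IsKappaCompact.exists_comp_map_eq_family pr.isColimit pr.directed
    hκ hK (fun k => hcpt (b.obj k)) (fun k => ι.map (c.ι.app k) ≫ u)
    (fun k => ι.map (c.ι.app k) ≫ u') fun k => by simp [hu, hu', reassoc_of% (h k)]
  have huq : u ≫ (pr.diag ⋙ ι).map (homOfLE hpq) = u' ≫ (pr.diag ⋙ ι).map (homOfLE hpq) :=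
    hom_ext_of_isColimit_of_fullyFaithful hc fun k => by simpa using hq k
  rw [← cancel_mono pr.iso.inv, ← hu, ← hu', ← pr.cocone.w (homOfLE hpq), ← Category.assoc, huq,
    Category.assoc]

lemma exists_desc_of_ind (hκ : ℵ₀ ≤ κ) (hcpt : ∀ a, IsKappaCompact κ (ι.obj a))
    (hgen : ∀ Y : C, Nonempty (IndPresentation κ ι Y)) {K : Type v} [SmallCategory K]
    (hK : #(Arrow K) < κ) {b : K ⥤ A} {c : Cocone b} (hc : IsColimit c) (z : Cocone (b ⋙ ι)) :
    ∃ m : ι.obj c.pt ⟶ z.pt, ∀ k, ι.map (c.ι.app k) ≫ m = z.ι.app k := by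
  obtain ⟨pr⟩ := hgen z.pt
  obtain ⟨p, g, hg⟩ := IsKappaCompact.exists_factor_family pr.isColimit pr.directed
    ((mk_le_mk_arrow K).trans_lt hK) (fun k => hcpt (b.obj k)) fun k => z.ι.app k ≫ pr.iso.inv
  obtain ⟨q, hpq, hq⟩ := IsKappaCompact.exists_comp_map_eq_family pr.isColimit pr.directed
    hκ hK (fun φ : Arrow K => hcpt (b.obj φ.left))
    (fun φ => ι.map (b.map φ.hom) ≫ g φ.right) (fun φ => g φ.left)
    fun φ => by simpa [hg] using z.w φ.hom =≫ pr.iso.inv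
  -- pushed to the stage `q`, the factorizations `g` are compatible: a cocone over `b` in `A`
  let v : Cocone b :=
    { pt := pr.diag.obj q
      ι :=
        { app := fun k => ι.preimage (g k ≫ (pr.diag ⋙ ι).map (homOfLE hpq))
          naturality := fun k k' φ => ι.map_injective (by simpa using hq (Arrow.mk φ)) } }
  refine ⟨ι.map (hc.desc v) ≫ pr.cocone.ι.app q ≫ pr.iso.hom, fun k => ?_⟩
  rw [← ι.map_comp_assoc, hc.fac, Functor.map_preimage, Category.assoc, pr.cocone.w_assoc,
    reassoc_of% (hg k), Iso.inv_hom_id, Category.comp_id]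

lemma preservesColimit_of_ind (hκ : ℵ₀ ≤ κ) (hcpt : ∀ a, IsKappaCompact κ (ι.obj a))
    (hgen : ∀ Y : C, Nonempty (IndPresentation κ ι Y)) {K : Type v} [SmallCategory K]
    (hK : #(Arrow K) < κ) (b : K ⥤ A) : PreservesColimit b ι where
  preserves {c} hc := ⟨IsColimit.ofExistsUnique fun z => by
    obtain ⟨m, hm⟩ := exists_desc_of_ind hκ hcpt hgen hK hc z
    exact ⟨m, hm, fun m' hm' => hom_ext_of_ind hκ hcpt hgen ((mk_le_mk_arrow K).trans_lt hK) hc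
      fun k => (hm' k).trans (hm k).symm⟩⟩

lemma hasColimit_of_ind (hκ : κ.IsRegular)
    (hA : ∀ (J : Type v) (_ : SmallCategory J), #J < κ → #(Arrow J) < κ →
      HasColimitsOfShape J A)
    (hcolim : ∀ (P : Type v) (_ : PartialOrder P), KDirected κ P → HasColimitsOfShape P C)
    (hcpt : ∀ a, IsKappaCompact κ (ι.obj a)) (hgen : ∀ Y : C, Nonempty (IndPresentation κ ι Y))
    {P : Type v} [PartialOrder P] (d : P ⥤ A) : HasColimit (d ⋙ ι) := by
  have hArrow (U : SmallSubsets κ P) : #(Arrow U.1) < κ := mk_arrow_lt hκ.aleph0_le U.2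
  have (U : SmallSubsets κ P) : HasColimit ((d ⋙ ι).restrictSubset U) := by
    have := hA U.1 inferInstance U.2 (hArrow U)
    have := preservesColimit_of_ind hκ.aleph0_le hcpt hgen (hArrow U) (d.restrictSubset U)
    exact (inferInstance : HasColimit (d.restrictSubset U ⋙ ι))
  have hP := kDirected_smallSubsets hκ P
  have := hcolim _ inferInstance hP
  exact ⟨⟨_, isColimitOfRestrictionColimits (hP.isDirected hκ.aleph0_le)
    (exists_mem_smallSubsets hκ.aleph0_le) (colimit.isColimit _)⟩⟩

end IndCategory

theorem stmt17_general (κ lam : Cardinal.{v}) (hκ : κ.IsRegular) (hlam : lam.IsRegular)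
    {A : Type v} [SmallCategory A]
    (hA : ∀ (J : Type v) (_ : SmallCategory J), #J < κ → #(Arrow J) < κ →
      HasColimitsOfShape J A)
    {C : Type u} [Category.{v} C]
    (hcolim : ∀ (P : Type v) (_ : PartialOrder P), KDirected κ P → HasColimitsOfShape P C)
    (ι : A ⥤ C) [ι.Full] [ι.Faithful]
    (hcpt : ∀ a : A, IsKappaCompact κ (ι.obj a))
    (hgen : ∀ Y : C, Nonempty (IndPresentation κ ι Y))
    (X : C) (hX : IsKappaCompact lam X) :
    Nonempty (SmallRetractPresentation lam ι X) := by
  obtain ⟨pres⟩ := hgen X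
  have (U : SmallSubsets lam pres.P) : HasColimit ((pres.diag ⋙ ι).restrictSubset U) :=
    hasColimit_of_ind hκ hA hcolim hcpt hgen (pres.diag.restrictSubset U)
  have hQ := kDirected_smallSubsets hlam pres.P
  obtain ⟨U, s, hs⟩ := hX.exists_factor (isColimitToRestrictionColimits
    (hQ.isDirected hlam.aleph0_le) (exists_mem_smallSubsets hlam.aleph0_le) pres.isColimit)
    hQ pres.iso.inv
  exact ⟨{ J := U.1
           small_obj := U.2
           small_hom := mk_arrow_lt hlam.aleph0_le U.2
           diag := pres.diag.restrictSubset U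
           cocone := colimit.cocone ((pres.diag ⋙ ι).restrictSubset U)
           isColimit := colimit.isColimit ((pres.diag ⋙ ι).restrictSubset U)
           s := s
           r := pres.cocone.toRestrictionColimits.ι.app U ≫ pres.iso.hom
           retract := by rw [← Category.assoc, hs, Iso.inv_hom_id] }⟩

/-- Let `κ ≤ λ` be regular cardinals and `A` a small category with `κ`-small colimits.
Modelling `C = Ind_κ(A)` as a category with `κ`-directed colimits, receiving a fully faithful
functor `ι : A ⥤ C` with `κ`-compact values, such that every object of `C` is a `κ`-directed
colimit of objects of `A`: every `λ`-compact object of `C` is a retract of a colimit of a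
`λ`-small diagram with values in (the image of) `A`. -/
theorem stmt17 (κ lam : Cardinal.{v}) (hκ : κ.IsRegular) (hlam : lam.IsRegular)
    (hκlam : κ ≤ lam)
    {A : Type v} [SmallCategory A]
    (hA : ∀ (J : Type v) (_ : SmallCategory J), #J < κ → #(Arrow J) < κ →
      HasColimitsOfShape J A)
    {C : Type u} [Category.{v} C]
    (hcolim : ∀ (P : Type v) (_ : PartialOrder P), KDirected κ P → HasColimitsOfShape P C)
    (ι : A ⥤ C) [ι.Full] [ι.Faithful]
    (hcpt : ∀ a : A, IsKappaCompact κ (ι.obj a))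
    (hgen : ∀ Y : C, Nonempty (IndPresentation κ ι Y))
    (X : C) (hX : IsKappaCompact lam X) :
    Nonempty (SmallRetractPresentation lam ι X) :=
  stmt17_general κ lam hκ hlam hA hcolim ι hcpt hgen X hX
end
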